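/- arXiv:2502.03235 — 6 statements merged into one kernel-verified Lean document; each statement's English description precedes it below -/
import Mathlib

section
/- For all real numbers b₁, b₂ and every real exponent γ with 2 < γ ≤ 3, there exists a constant c > 0 (depending only on γ) such that ||b₁ + b₂|^γ − |b₁|^γ − γ|b₁|^{γ−2} b₁ b₂ − (1/2)γ(γ−1)|b₁|^{γ−2} b₂²| ≤ c|b₂|^γ. -/
/-!
The function `φ x = |x| ^ (γ - 2) * x`, which is `1/γ` times the derivative of `|x| ^ γ`, has
derivative `(γ - 1) * |x| ^ (γ - 2)`; since `0 < γ - 2 ≤ 1`, subadditivity of `t ↦ t ^ (γ - 2)`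
makes this derivative `(γ - 2)`-Hölder. Two applications of the mean value theorem, each gaining
one Hölder power of `|b₂|`, bound the second-order Taylor remainder of `|x| ^ γ` by
`γ * (γ - 1) * |b₂| ^ γ`.
-/

open Set Asymptotics

lemma abs_rpow_le_abs_sub_rpow_add {p : ℝ} (hp0 : 0 ≤ p) (hp1 : p ≤ 1) (x y : ℝ) :
    |x| ^ p ≤ |x - y| ^ p + |y| ^ p :=
  calc |x| ^ p ≤ (|x - y| + |y|) ^ p := by
        gcongr
        simpa using abs_sub_abs_le_abs_sub x y
    _ ≤ |x - y| ^ p + |y| ^ p := Real.rpow_add_le_add_rpow (abs_nonneg _) (abs_nonneg _) hp0 hp1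

lemma abs_abs_rpow_sub_abs_rpow_le {p : ℝ} (hp0 : 0 ≤ p) (hp1 : p ≤ 1) (x y : ℝ) :
    |(|x| ^ p - |y| ^ p)| ≤ |x - y| ^ p := by
  have hxy := abs_rpow_le_abs_sub_rpow_add hp0 hp1 x y
  have hyx := abs_rpow_le_abs_sub_rpow_add hp0 hp1 y x
  rw [abs_sub_comm] at hyx
  exact abs_sub_le_iff.2 ⟨by linarith, by linarith⟩

lemma hasDerivAt_abs_rpow_mul_self {r : ℝ} (hr : 0 < r) (x : ℝ) :
    HasDerivAt (fun y ↦ |y| ^ r * y) ((r + 1) * |x| ^ r) x := by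
  rcases eq_or_ne x 0 with rfl | hx
  · -- `|y| ^ r * y` is dominated by `|y| ^ (r + 1)`, whose derivative at `0` vanishes.
    have h := hasDerivAt_abs_rpow 0 (p := r + 1) (by linarith)
    rw [hasDerivAt_iff_isLittleO_nhds_zero] at h ⊢
    simp only [zero_add, abs_zero, Real.zero_rpow hr.ne', Real.zero_rpow (by linarith : r + 1 ≠ 0),
      mul_zero, sub_zero, smul_zero] at h ⊢
    refine (isBigO_of_le _ fun y ↦ ?_).trans_isLittleO h
    rw [Real.rpow_add_one' (abs_nonneg y) (by linarith), Real.norm_eq_abs, Real.norm_eq_abs,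
      abs_mul, abs_mul, abs_abs]
  · have h := ((hasDerivAt_abs hx).rpow_const (p := r) (Or.inl (abs_ne_zero.2 hx))).mul
      (hasDerivAt_id x)
    refine (show HasDerivAt (fun y ↦ |y| ^ r * y) _ x from h).congr_deriv ?_
    have hsign : (SignType.sign x : ℝ) * x = |x| := sign_mul_self x
    have hpow : |x| ^ (r - 1) * |x| = |x| ^ r := by
      rw [← Real.rpow_add_one (abs_ne_zero.2 hx), sub_add_cancel]
    rw [id]
    linear_combination r * |x| ^ (r - 1) * hsign + r * hpow

lemma abs_sub_sub_mul_sub_le_of_abs_deriv_sub_le {f f' : ℝ → ℝ} {a L C s : ℝ} (hs : 0 ≤ s)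
    (hf : ∀ x, HasDerivAt f (f' x) x) (hf' : ∀ x, |f' x - L| ≤ C * |x - a| ^ s) (x : ℝ) :
    |f x - f a - L * (x - a)| ≤ C * |x - a| ^ (s + 1) := by
  have hC : 0 ≤ C := by simpa using (abs_nonneg _).trans (hf' (a + 1))
  have h := (convex_uIcc a x).norm_image_sub_le_of_norm_hasDerivWithin_le
    (f := fun y ↦ f y - L * y) (f' := fun y ↦ f' y - L) (C := C * |x - a| ^ s)
    (fun y _ ↦ ((hf y).sub ((hasDerivAt_id y).const_mul L)).hasDerivWithinAt.congr_deriv (by simp))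
    (fun y hy ↦ (hf' y).trans (mul_le_mul_of_nonneg_left
      (Real.rpow_le_rpow (abs_nonneg _) (abs_sub_left_of_mem_uIcc hy) hs) hC))
    left_mem_uIcc right_mem_uIcc
  rw [Real.norm_eq_abs, Real.norm_eq_abs] at h
  rw [Real.rpow_add_one' (abs_nonneg _) (by linarith), ← mul_assoc]
  convert h using 2
  ring

lemma abs_taylor_abs_rpow_mul_self_le {r : ℝ} (hr0 : 0 < r) (hr1 : r ≤ 1) (a x : ℝ) :
    |(|x| ^ r * x - |a| ^ r * a - (r + 1) * |a| ^ r * (x - a))| ≤ (r + 1) * |x - a| ^ (r + 1) := by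
  refine abs_sub_sub_mul_sub_le_of_abs_deriv_sub_le hr0.le (hasDerivAt_abs_rpow_mul_self hr0)
    (fun y ↦ ?_) x
  rw [← mul_sub, abs_mul, abs_of_pos (by linarith)]
  gcongr
  exact abs_abs_rpow_sub_abs_rpow_le hr0.le hr1 y a

lemma abs_taylor_abs_rpow_le {q : ℝ} (hq2 : 2 < q) (hq3 : q ≤ 3) (a x : ℝ) :
    |(|x| ^ q - |a| ^ q - q * |a| ^ (q - 2) * a * (x - a)
      - 1 / 2 * q * (q - 1) * |a| ^ (q - 2) * (x - a) ^ 2)| ≤ q * (q - 1) * |x - a| ^ q := by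
  have hderiv (y : ℝ) :
      HasDerivAt (fun y ↦ |y| ^ q - 1 / 2 * q * (q - 1) * |a| ^ (q - 2) * (y - a) ^ 2)
      (q * |y| ^ (q - 2) * y - q * (q - 1) * |a| ^ (q - 2) * (y - a)) y :=
    ((hasDerivAt_abs_rpow y (by linarith)).sub
      ((((hasDerivAt_id y).sub_const a).pow 2).const_mul _)).congr_deriv (by rw [id]; ring)
  have hderiv_sub (y : ℝ) :
      |q * |y| ^ (q - 2) * y - q * (q - 1) * |a| ^ (q - 2) * (y - a) - q * |a| ^ (q - 2) * a|
        ≤ q * (q - 1) * |y - a| ^ (q - 1) := by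
    have h := abs_taylor_abs_rpow_mul_self_le (r := q - 2) (by linarith) (by linarith) a y
    rw [show q - 2 + 1 = q - 1 by ring] at h
    calc _ = |q * (|y| ^ (q - 2) * y - |a| ^ (q - 2) * a
              - (q - 1) * |a| ^ (q - 2) * (y - a))| := by
          congr 1; ring
      _ = q * |(|y| ^ (q - 2) * y - |a| ^ (q - 2) * a - (q - 1) * |a| ^ (q - 2) * (y - a))| := by
          rw [abs_mul, abs_of_pos (by linarith)]
      _ ≤ q * ((q - 1) * |y - a| ^ (q - 1)) := by gcongr
      _ = q * (q - 1) * |y - a| ^ (q - 1) := by ring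
  have h := abs_sub_sub_mul_sub_le_of_abs_deriv_sub_le (by linarith) hderiv hderiv_sub x
  rw [sub_add_cancel] at h
  convert h using 2
  ring

theorem stmt_0 (γ : ℝ) (hγ2 : 2 < γ) (hγ3 : γ ≤ 3) :
    ∃ c : ℝ, 0 < c ∧ ∀ b₁ b₂ : ℝ,
      abs (|b₁ + b₂| ^ γ - |b₁| ^ γ - γ * |b₁| ^ (γ - 2) * b₁ * b₂
        - (1 / 2) * γ * (γ - 1) * |b₁| ^ (γ - 2) * b₂ ^ 2)
        ≤ c * |b₂| ^ γ := by
  refine ⟨γ * (γ - 1), by nlinarith, fun b₁ b₂ ↦ ?_⟩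
  simpa using abs_taylor_abs_rpow_le hγ2 hγ3 b₁ (b₁ + b₂)
end

section
/- Let γ > 0 and β > 0 be reals. There exists a constant c > 0 (depending only on γ and β) such that for all real numbers b₁, b₂, z with |z| ≤ β|b₁| one has ||b₁+b₂|^{γ−1}(b₁+b₂)z − |b₁|^{γ−1}b₁z − γ|b₁|^{γ−1}b₂z| ≤ c(|b₁|^{γ−1} b₂² + |b₂|^{γ+1}). -/
/-!
Writing `b₂ = t b₁`, homogeneity of `x ↦ |x|^(γ-1) x` reduces the claim to the scalar estimate
`||1+t|^(γ-1)(1+t) - 1 - γt| ≤ c (t² + |t|^(γ+1))`, with the factor `|z| ≤ β|b₁|` supplying the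
missing power of `|b₁|`. For `|t| ≤ 1/2` this is a second-order Taylor bound for `x ↦ x^γ` at `1`,
whose derivative is Lipschitz on `[1/2, 3/2]`; for `|t| ≥ 1/2` every term is crudely bounded by
`t²` or `|t|^(γ+1)`.
-/

open Real Set
open scoped NNReal

theorem abs_sub_sub_mul_le_of_lipschitzOnWith_deriv {f f' : ℝ → ℝ} {s : Set ℝ} {K : ℝ≥0}
    (hs : Convex ℝ s) (hf : ∀ y ∈ s, HasDerivWithinAt f (f' y) s y)
    (hf' : LipschitzOnWith K f' s) {a x : ℝ} (ha : a ∈ s) (hx : x ∈ s) :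
    |f x - f a - f' a * (x - a)| ≤ K * (x - a) ^ 2 := by
  have hseg : uIcc a x ⊆ s := hs.ordConnected.uIcc_subset ha hx
  have hderiv : ∀ y ∈ uIcc a x,
      HasDerivWithinAt (fun y => f y - f' a * y) (f' y - f' a) (uIcc a x) y := fun y hy =>
    (((hf y (hseg hy)).mono hseg).sub ((hasDerivWithinAt_id y _).const_mul (f' a))).congr_deriv
      (by ring)
  have hbound : ∀ y ∈ uIcc a x, ‖f' y - f' a‖ ≤ K * |x - a| := fun y hy =>
    calc ‖f' y - f' a‖ ≤ K * |y - a| := hf'.dist_le_mul y (hseg hy) a ha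
      _ ≤ K * |x - a| := mul_le_mul_of_nonneg_left (abs_sub_left_of_mem_uIcc hy) K.2
  calc |f x - f a - f' a * (x - a)| = ‖(f x - f' a * x) - (f a - f' a * a)‖ := by
        rw [Real.norm_eq_abs]; ring_nf
    _ ≤ K * |x - a| * ‖x - a‖ :=
        (convex_uIcc a x).norm_image_sub_le_of_norm_hasDerivWithin_le hderiv hbound
          left_mem_uIcc right_mem_uIcc
    _ = K * (x - a) ^ 2 := by rw [Real.norm_eq_abs, mul_assoc, ← sq, sq_abs]

theorem exists_abs_rpow_sub_one_sub_le (γ : ℝ) :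
    ∃ K : ℝ≥0, ∀ x ∈ Icc (1 / 2 : ℝ) (3 / 2), |x ^ γ - 1 - γ * (x - 1)| ≤ K * (x - 1) ^ 2 := by
  have hne : ∀ x ∈ Icc (1 / 2 : ℝ) (3 / 2), x ≠ 0 := fun x hx => by
    linarith [hx.1]
  have hderiv : ContDiffOn ℝ 1 (fun x : ℝ => γ * x ^ (γ - 1)) (Icc (1 / 2) (3 / 2)) :=
    fun x hx => (contDiffAt_const.mul (contDiffAt_rpow_const_of_ne (hne x hx))).contDiffWithinAt
  obtain ⟨K, hK⟩ := hderiv.exists_lipschitzOnWith one_ne_zero (convex_Icc _ _) isCompact_Icc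
  refine ⟨K, fun x hx => ?_⟩
  have := abs_sub_sub_mul_le_of_lipschitzOnWith_deriv (convex_Icc _ _)
    (fun y hy => (hasDerivAt_rpow_const (Or.inl (hne y hy))).hasDerivWithinAt) hK
    (by norm_num : (1 : ℝ) ∈ Icc (1 / 2 : ℝ) (3 / 2)) hx
  simpa only [one_rpow, mul_one] using this

noncomputable def oddRpow (x γ : ℝ) : ℝ := |x| ^ (γ - 1) * x

theorem oddRpow_mul (x y γ : ℝ) : oddRpow (x * y) γ = oddRpow x γ * oddRpow y γ := by
  simp only [oddRpow, abs_mul, mul_rpow (abs_nonneg x) (abs_nonneg y)]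
  ring

@[simp]
theorem oddRpow_one (γ : ℝ) : oddRpow 1 γ = 1 := by
  simp [oddRpow]

theorem oddRpow_of_pos {x : ℝ} (hx : 0 < x) (γ : ℝ) : oddRpow x γ = x ^ γ := by
  rw [oddRpow, abs_of_pos hx, rpow_sub_one hx.ne', div_mul_cancel₀ _ hx.ne']

theorem abs_oddRpow (x : ℝ) {γ : ℝ} (hγ : γ ≠ 0) : |oddRpow x γ| = |x| ^ γ := by
  rcases eq_or_ne x 0 with rfl | hx
  · simp [oddRpow, zero_rpow hγ]
  · rw [oddRpow, abs_mul, abs_of_nonneg (by positivity), rpow_sub_one (abs_ne_zero.mpr hx),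
      div_mul_cancel₀ _ (abs_ne_zero.mpr hx)]

theorem oddRpow_add_sub_eq {b : ℝ} (hb : b ≠ 0) (b' γ : ℝ) :
    oddRpow (b + b') γ - oddRpow b γ - γ * |b| ^ (γ - 1) * b' =
      oddRpow b γ * (oddRpow (1 + b' / b) γ - 1 - γ * (b' / b)) := by
  have hsplit : b + b' = b * (1 + b' / b) := by field_simp
  rw [hsplit, oddRpow_mul, oddRpow]
  field_simp

theorem rpow_sub_one_mul_sq_add_abs_rpow_eq {b : ℝ} (hb : b ≠ 0) (b' γ : ℝ) :
    |b| ^ (γ - 1) * b' ^ 2 + |b'| ^ (γ + 1) =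
      |b| ^ (γ + 1) * ((b' / b) ^ 2 + |b' / b| ^ (γ + 1)) := by
  have hb' : 0 < |b| := abs_pos.mpr hb
  have hpow : |b| ^ (γ + 1) = |b| ^ (γ - 1) * b ^ 2 := by
    rw [show γ + 1 = γ - 1 + 2 by ring, rpow_add hb', rpow_two, sq_abs]
  rw [abs_div, div_rpow (abs_nonneg _) hb'.le, hpow]
  field_simp

theorem abs_oddRpow_one_add_sub_le_of_half_le {γ t : ℝ} (hγ : 0 < γ) (ht : 1 / 2 ≤ |t|) :
    |oddRpow (1 + t) γ - 1 - γ * t| ≤ 2 * 3 ^ γ * |t| ^ (γ + 1) + (4 + 2 * γ) * t ^ 2 := by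
  have htri : |oddRpow (1 + t) γ - 1 - γ * t| ≤ |1 + t| ^ γ + 1 + γ * |t| := by
    calc |oddRpow (1 + t) γ - 1 - γ * t| ≤ |oddRpow (1 + t) γ| + |1| + |γ * t| :=
          (abs_sub _ _).trans (add_le_add_left (abs_sub _ _) _)
      _ = |1 + t| ^ γ + 1 + γ * |t| := by rw [abs_oddRpow _ hγ.ne', abs_one, abs_mul, abs_of_pos hγ]
  have hpow : |1 + t| ^ γ ≤ 2 * 3 ^ γ * |t| ^ (γ + 1) :=
    calc |1 + t| ^ γ ≤ (3 * |t|) ^ γ := by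
          gcongr; linarith [abs_add_le 1 t, abs_one (α := ℝ)]
      _ = 3 ^ γ * |t| ^ γ := mul_rpow (by norm_num) (abs_nonneg t)
      _ ≤ 3 ^ γ * |t| ^ γ * (2 * |t|) := le_mul_of_one_le_right (by positivity) (by linarith)
      _ = 2 * 3 ^ γ * |t| ^ (γ + 1) := by
          rw [rpow_add_one (by positivity)]; ring
  have hsq : |t| ≤ 2 * t ^ 2 := by nlinarith [sq_abs t]
  nlinarith [sq_abs t]

theorem exists_abs_oddRpow_one_add_sub_le {γ : ℝ} (hγ : 0 < γ) :
    ∃ c > 0, ∀ t : ℝ, |oddRpow (1 + t) γ - 1 - γ * t| ≤ c * (t ^ 2 + |t| ^ (γ + 1)) := by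
  obtain ⟨K, hK⟩ := exists_abs_rpow_sub_one_sub_le γ
  refine ⟨K + 2 * 3 ^ γ + 4 + 2 * γ, by positivity, fun t => ?_⟩
  have hsq : 0 ≤ t ^ 2 := sq_nonneg t
  have hrpow : 0 ≤ |t| ^ (γ + 1) := by positivity
  have h3 : 0 ≤ (3 : ℝ) ^ γ := by positivity
  rcases le_or_gt |t| (1 / 2) with ht | ht
  · obtain ⟨ht₁, ht₂⟩ := abs_le.mp ht
    have hsmall := hK (1 + t) ⟨by linarith, by linarith⟩
    rw [← oddRpow_of_pos (by linarith), add_sub_cancel_left] at hsmall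
    nlinarith [K.2]
  · have hlarge := abs_oddRpow_one_add_sub_le_of_half_le hγ ht.le
    nlinarith [K.2]

theorem stmt_5 (γ β : ℝ) (hγ : 0 < γ) (hβ : 0 < β) :
    ∃ c : ℝ, 0 < c ∧ ∀ b₁ b₂ z : ℝ, |z| ≤ β * |b₁| →
      abs (|b₁ + b₂| ^ (γ - 1) * (b₁ + b₂) * z - |b₁| ^ (γ - 1) * b₁ * z
        - γ * |b₁| ^ (γ - 1) * b₂ * z)
        ≤ c * (|b₁| ^ (γ - 1) * b₂ ^ 2 + |b₂| ^ (γ + 1)) := by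
  obtain ⟨c, hc, hscalar⟩ := exists_abs_oddRpow_one_add_sub_le hγ
  refine ⟨c * β, by positivity, fun b₁ b₂ z hz => ?_⟩
  rcases eq_or_ne b₁ 0 with rfl | hb₁
  · obtain rfl : z = 0 := abs_nonpos_iff.mp (by simpa using hz)
    simp only [mul_zero, sub_zero, abs_zero]
    positivity
  set t := b₂ / b₁
  calc |(|b₁ + b₂| ^ (γ - 1) * (b₁ + b₂) * z - |b₁| ^ (γ - 1) * b₁ * z
        - γ * |b₁| ^ (γ - 1) * b₂ * z)|
      = |oddRpow (b₁ + b₂) γ - oddRpow b₁ γ - γ * |b₁| ^ (γ - 1) * b₂| * |z| := by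
        rw [← abs_mul, oddRpow, oddRpow]; ring_nf
    _ = |b₁| ^ γ * |oddRpow (1 + t) γ - 1 - γ * t| * |z| := by
        rw [oddRpow_add_sub_eq hb₁, abs_mul, abs_oddRpow _ hγ.ne']
    _ ≤ |b₁| ^ γ * (c * (t ^ 2 + |t| ^ (γ + 1))) * (β * |b₁|) := by
        gcongr
        exact hscalar t
    _ = c * β * (|b₁| ^ (γ + 1) * (t ^ 2 + |t| ^ (γ + 1))) := by
        rw [rpow_add_one (abs_ne_zero.mpr hb₁)]; ring
    _ = c * β * (|b₁| ^ (γ - 1) * b₂ ^ 2 + |b₂| ^ (γ + 1)) := by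
        rw [rpow_sub_one_mul_sq_add_abs_rpow_eq hb₁]
end

section
/- Let 0 < γ ≤ 1 and β > 0. There exists a constant c > 0 (depending only on γ and β) such that for all real numbers b₁, b₂, z with |z| ≤ β|b₁| one has ||b₁+b₂|^γ z − |b₁|^γ z| ≤ c |b₁ b₂|^{(γ+1)/2}. -/
/-!
Write `X = |b₁ + b₂|`, `Y = |b₁|`, `B = |b₂|`, so that `|X - Y| ≤ B`. Since `t ↦ t ^ γ` is
concave and vanishes at `0`, the difference `D = |X ^ γ - Y ^ γ|` obeys two bounds: the Hölder bound
`D ≤ B ^ γ` and the tangent-line bound `Y * D ≤ Y ^ γ * B`. Multiplying them gives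
`(Y * D) ^ 2 ≤ (Y * B) ^ (γ + 1)`, and `|z| ≤ β * Y` finishes the proof with `c = β`.
-/

open Real

lemma mul_rpow_le_rpow_mul {a b γ : ℝ} (ha : 0 ≤ a) (hab : a ≤ b) (hγ : γ ≤ 1) :
    a * b ^ γ ≤ a ^ γ * b := by
  have hb : 0 ≤ b := ha.trans hab
  have hsplit : ∀ t : ℝ, 0 ≤ t → t = t ^ γ * t ^ (1 - γ) := fun t ht => by
    rw [← rpow_add' ht (by norm_num), add_sub_cancel, rpow_one]
  calc a * b ^ γ = a ^ γ * (a ^ (1 - γ) * b ^ γ) := by rw [← mul_assoc, ← hsplit a ha]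
    _ ≤ a ^ γ * (b ^ (1 - γ) * b ^ γ) := by gcongr
    _ = a ^ γ * b := by rw [mul_comm (b ^ (1 - γ)), ← hsplit b hb]

lemma mul_abs_rpow_sub_rpow_le {x y γ : ℝ} (hx : 0 ≤ x) (hy : 0 ≤ y) (hγ0 : 0 ≤ γ)
    (hγ1 : γ ≤ 1) : y * |x ^ γ - y ^ γ| ≤ y ^ γ * |x - y| := by
  rcases le_total x y with hxy | hyx
  · have hpow : x ^ γ ≤ y ^ γ := rpow_le_rpow hx hxy hγ0
    rw [abs_of_nonpos (sub_nonpos.2 hpow), abs_of_nonpos (sub_nonpos.2 hxy)]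
    linarith [mul_rpow_le_rpow_mul hx hxy hγ1]
  · have hpow : y ^ γ ≤ x ^ γ := rpow_le_rpow hy hyx hγ0
    rw [abs_of_nonneg (sub_nonneg.2 hpow), abs_of_nonneg (sub_nonneg.2 hyx)]
    linarith [mul_rpow_le_rpow_mul hy hyx hγ1]

lemma abs_rpow_sub_rpow_le_abs_sub_rpow {x y γ : ℝ} (hx : 0 ≤ x) (hy : 0 ≤ y) (hγ0 : 0 ≤ γ)
    (hγ1 : γ ≤ 1) : |x ^ γ - y ^ γ| ≤ |x - y| ^ γ := by
  wlog hyx : y ≤ x generalizing x y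
  · rw [abs_sub_comm, abs_sub_comm x]
    exact this hy hx (le_of_not_ge hyx)
  have hpow : y ^ γ ≤ x ^ γ := rpow_le_rpow hy hyx hγ0
  have hsub : x ^ γ ≤ y ^ γ + (x - y) ^ γ := by
    simpa using rpow_add_le_add_rpow hy (sub_nonneg.2 hyx) hγ0 hγ1
  rw [abs_of_nonneg (sub_nonneg.2 hpow), abs_of_nonneg (sub_nonneg.2 hyx)]
  linarith

lemma mul_abs_rpow_sub_rpow_le_mul_rpow {x y b γ : ℝ} (hx : 0 ≤ x) (hy : 0 ≤ y)
    (hxy : |x - y| ≤ b) (hγ0 : 0 ≤ γ) (hγ1 : γ ≤ 1) :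
    y * |x ^ γ - y ^ γ| ≤ (y * b) ^ ((γ + 1) / 2) := by
  have hb : 0 ≤ b := (abs_nonneg _).trans hxy
  set D := y * |x ^ γ - y ^ γ|
  have hD : 0 ≤ D := by positivity
  have htangent : D ≤ y ^ γ * b := (mul_abs_rpow_sub_rpow_le hx hy hγ0 hγ1).trans (by gcongr)
  have hholder : D ≤ y * b ^ γ := mul_le_mul_of_nonneg_left
    ((abs_rpow_sub_rpow_le_abs_sub_rpow hx hy hγ0 hγ1).trans (by gcongr)) hy
  have hsq : D ^ 2 ≤ ((y * b) ^ ((γ + 1) / 2)) ^ 2 := by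
    rw [← rpow_mul_natCast (by positivity), mul_rpow hy hb]
    calc D ^ 2 = D * D := sq D
      _ ≤ (y ^ γ * b) * (y * b ^ γ) := mul_le_mul htangent hholder hD (by positivity)
      _ = y ^ (γ + 1) * b ^ (γ + 1) := by
        rw [rpow_add_one' hy (by linarith), rpow_add_one' hb (by linarith)]; ring
      _ = y ^ ((γ + 1) / 2 * (2 : ℕ)) * b ^ ((γ + 1) / 2 * (2 : ℕ)) := by norm_num
  exact (pow_le_pow_iff_left₀ hD (by positivity) two_ne_zero).1 hsq

theorem stmt_7 (γ β : ℝ) (hγ0 : 0 < γ) (hγ1 : γ ≤ 1) (hβ : 0 < β) :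
    ∃ c : ℝ, 0 < c ∧ ∀ b₁ b₂ z : ℝ, |z| ≤ β * |b₁| →
      abs (|b₁ + b₂| ^ γ * z - |b₁| ^ γ * z) ≤ c * |b₁ * b₂| ^ ((γ + 1) / 2) := by
  refine ⟨β, hβ, fun b₁ b₂ z hz => ?_⟩
  have hdist : abs (|b₁ + b₂| - |b₁|) ≤ |b₂| := by
    simpa using abs_abs_sub_abs_le_abs_sub (b₁ + b₂) b₁
  calc abs (|b₁ + b₂| ^ γ * z - |b₁| ^ γ * z) = abs (|b₁ + b₂| ^ γ - |b₁| ^ γ) * |z| := by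
        rw [← sub_mul, abs_mul]
    _ ≤ abs (|b₁ + b₂| ^ γ - |b₁| ^ γ) * (β * |b₁|) := by gcongr
    _ = β * (|b₁| * abs (|b₁ + b₂| ^ γ - |b₁| ^ γ)) := by ring
    _ ≤ β * (|b₁| * |b₂|) ^ ((γ + 1) / 2) := by
        gcongr
        exact mul_abs_rpow_sub_rpow_le_mul_rpow (abs_nonneg _) (abs_nonneg _) hdist hγ0.le hγ1
    _ = β * |b₁ * b₂| ^ ((γ + 1) / 2) := by rw [abs_mul]
end

section
/- Let N ≥ 1, let 1 < γ ≤ 3, fix i ∈ {1,…,N}, and fix a constant β > 0. There exists c > 0 (depending only on γ, N, β) such that for all positive reals b₁, …, b_N and every real s with |s| ≤ β b_i, one has |(Σ_{j=1}^N b_j)^γ s − Σ_{j=1}^N b_j^γ s − γ b_i^{γ−1}(Σ_{j≠i} b_j) s| ≤ c Σ_{k≠j} (b_k b_j)^{(γ+1)/2}. -/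
open Real

namespace Stmt9


theorem bern_ge {x y γ : ℝ} (hx : 0 < x) (hy : 0 ≤ y) (hγ : 1 ≤ γ) :
    x ^ γ + γ * x ^ (γ - 1) * y ≤ (x + y) ^ γ := by
  have hs : (-1 : ℝ) ≤ y / x := le_trans (by norm_num) (div_nonneg hy hx.le)
  have h := one_add_mul_self_le_rpow_one_add hs hγ
  have hpow : (0:ℝ) ≤ x ^ γ := Real.rpow_nonneg hx.le γ
  have h2 : x ^ γ * (1 + γ * (y / x)) ≤ x ^ γ * (1 + y / x) ^ γ :=
    mul_le_mul_of_nonneg_left h hpow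
  have e1 : x ^ γ * (1 + y / x) ^ γ = (x + y) ^ γ := by
    rw [← Real.mul_rpow hx.le (by positivity)]
    congr 1; field_simp
  have e2 : x ^ γ * (1 + γ * (y / x)) = x ^ γ + γ * x ^ (γ - 1) * y := by
    rw [Real.rpow_sub hx, Real.rpow_one]; field_simp
  rw [e2, e1] at h2; exact h2

theorem bern_le {x y q : ℝ} (hx : 0 < x) (hy : 0 ≤ y) (hq0 : 0 ≤ q) (hq1 : q ≤ 1) :
    (x + y) ^ q ≤ x ^ q + q * x ^ (q - 1) * y := by
  have hs : (-1 : ℝ) ≤ y / x := le_trans (by norm_num) (div_nonneg hy hx.le)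
  have h := rpow_one_add_le_one_add_mul_self hs hq0 hq1
  have hpow : (0:ℝ) ≤ x ^ q := Real.rpow_nonneg hx.le q
  have h2 : x ^ q * (1 + y / x) ^ q ≤ x ^ q * (1 + q * (y / x)) :=
    mul_le_mul_of_nonneg_left h hpow
  have e1 : x ^ q * (1 + y / x) ^ q = (x + y) ^ q := by
    rw [← Real.mul_rpow hx.le (by positivity)]
    congr 1; field_simp
  have e2 : x ^ q * (1 + q * (y / x)) = x ^ q + q * x ^ (q - 1) * y := by
    rw [Real.rpow_sub hx, Real.rpow_one]; field_simp
  rw [e2, e1] at h2; exact h2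

theorem diff_le {a b q : ℝ} (ha : 0 < a) (hb : 0 ≤ b) (hba : b ≤ a) (hq : 1 ≤ q) :
    a ^ q - b ^ q ≤ q * a ^ (q - 1) * (a - b) := by
  have hs : (-1 : ℝ) ≤ b / a - 1 := by
    have : (0:ℝ) ≤ b / a := div_nonneg hb ha.le
    linarith
  have h := one_add_mul_self_le_rpow_one_add hs hq
  have e0 : (1 : ℝ) + (b / a - 1) = b / a := by ring
  rw [e0] at h
  have hpow : (0:ℝ) ≤ a ^ q := Real.rpow_nonneg ha.le q
  have h2 : a ^ q * (1 + q * (b / a - 1)) ≤ a ^ q * (b / a) ^ q :=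
    mul_le_mul_of_nonneg_left h hpow
  have e1 : a ^ q * (b / a) ^ q = b ^ q := by
    rw [← Real.mul_rpow ha.le (div_nonneg hb ha.le)]
    congr 1; field_simp
  have e2 : a ^ q * (1 + q * (b / a - 1)) = a ^ q + q * a ^ (q - 1) * (b - a) := by
    rw [Real.rpow_sub ha, Real.rpow_one]; field_simp
  rw [e2, e1] at h2
  linarith

theorem subadd {x y q : ℝ} (hx : 0 ≤ x) (hy : 0 ≤ y) (h0 : 0 ≤ q) (h1 : q ≤ 1) :
    (x + y) ^ q ≤ x ^ q + y ^ q := by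
  have h := NNReal.rpow_add_le_add_rpow x.toNNReal y.toNNReal h0 h1
  have := NNReal.coe_le_coe.2 h
  push_cast at this
  rwa [Real.coe_toNNReal _ hx, Real.coe_toNNReal _ hy] at this

theorem mono_pair {x y a b p : ℝ} (hx : 0 < x) (hy : 0 < y) (hxy : x ≤ y)
    (hab : a + b = 2 * p) (hb : b ≤ p) : x ^ a * y ^ b ≤ (x * y) ^ p := by
  have key : x ^ a * y ^ b = (x * y) ^ p * (x / y) ^ (p - b) := by
    rw [Real.rpow_def_of_pos hx, Real.rpow_def_of_pos hy,
      Real.rpow_def_of_pos (mul_pos hx hy), Real.rpow_def_of_pos (div_pos hx hy),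
      ← Real.exp_add, ← Real.exp_add, Real.log_mul hx.ne' hy.ne',
      Real.log_div hx.ne' hy.ne']
    congr 1
    linear_combination Real.log x * hab
  have hle : (x / y) ^ (p - b) ≤ 1 :=
    Real.rpow_le_one (by positivity) (by rw [div_le_one hy]; exact hxy) (by linarith)
  calc x ^ a * y ^ b = (x * y) ^ p * (x / y) ^ (p - b) := key
    _ ≤ (x * y) ^ p * 1 :=
        mul_le_mul_of_nonneg_left hle (Real.rpow_nonneg (by positivity) p)
    _ = (x * y) ^ p := mul_one _


theorem usq {u γ : ℝ} (hu0 : 0 ≤ u) (hu1 : u ≤ 1) (h1 : 1 < γ) (h3 : γ ≤ 3) :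
    (1 + u) ^ γ ≤ 1 + γ * u + 4 * u ^ 2 := by
  have hv : (0:ℝ) < 1 + u := by linarith
  rcases le_or_gt γ 2 with h2 | h2
  · have ht := rpow_one_add_le_one_add_mul_self (show (-1:ℝ) ≤ u by linarith)
      (show (0:ℝ) ≤ γ - 1 by linarith) (show γ - 1 ≤ 1 by linarith)
    have e : (1 + u) ^ γ = (1 + u) ^ (γ - 1) * (1 + u) := by
      rw [← Real.rpow_add_one hv.ne' (γ - 1)]; ring_nf
    rw [e]
    have h2' : (1 + u) ^ (γ - 1) * (1 + u) ≤ (1 + (γ - 1) * u) * (1 + u) :=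
      mul_le_mul_of_nonneg_right ht hv.le
    nlinarith [sq_nonneg u]
  · have ht := rpow_one_add_le_one_add_mul_self (show (-1:ℝ) ≤ u by linarith)
      (show (0:ℝ) ≤ γ - 2 by linarith) (show γ - 2 ≤ 1 by linarith)
    have e : (1 + u) ^ γ = (1 + u) ^ (γ - 2) * (1 + u) * (1 + u) := by
      rw [← Real.rpow_add_one hv.ne' (γ - 2), ← Real.rpow_add_one hv.ne']; ring_nf
    rw [e]
    have h2' : (1 + u) ^ (γ - 2) * (1 + u) * (1 + u) ≤ (1 + (γ - 2) * u) * (1 + u) * (1 + u) := by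
      have := mul_le_mul_of_nonneg_right ht hv.le
      exact mul_le_mul_of_nonneg_right this hv.le
    nlinarith [sq_nonneg u, mul_nonneg (mul_nonneg hu0 hu0) hu0,
      mul_nonneg (mul_nonneg (sub_nonneg.2 hu1) hu0) hu0,
      mul_nonneg (mul_nonneg (sub_nonneg.2 h2.le) hu0) hu0]

theorem second_order {x y γ : ℝ} (hx : 0 < x) (hy : 0 ≤ y) (hyx : y ≤ x)
    (h1 : 1 < γ) (h3 : γ ≤ 3) :
    (x + y) ^ γ ≤ x ^ γ + γ * x ^ (γ - 1) * y + 4 * x ^ (γ - 2) * y ^ 2 := by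
  have hu0 : 0 ≤ y / x := div_nonneg hy hx.le
  have hu1 : y / x ≤ 1 := by rw [div_le_one hx]; exact hyx
  have h := usq hu0 hu1 h1 h3
  have h2 := mul_le_mul_of_nonneg_left h (Real.rpow_nonneg hx.le γ)
  have e1 : x ^ γ * (1 + y / x) ^ γ = (x + y) ^ γ := by
    rw [← Real.mul_rpow hx.le (by positivity)]
    congr 1; field_simp
  have e2 : x ^ γ * (1 + γ * (y / x) + 4 * (y / x) ^ 2)
      = x ^ γ + γ * x ^ (γ - 1) * y + 4 * x ^ (γ - 2) * y ^ 2 := by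
    rw [Real.rpow_sub hx γ 1, Real.rpow_sub hx γ 2, Real.rpow_one,
      show (2:ℝ) = ((2:ℕ):ℝ) by norm_num, Real.rpow_natCast]
    field_simp
  rw [e1, e2] at h2; exact h2

theorem two_var {x y γ : ℝ} (hx : 0 < x) (hy : 0 < y) (h1 : 1 < γ) (h3 : γ ≤ 3) :
    x * |(x + y) ^ γ - x ^ γ - y ^ γ - γ * x ^ (γ - 1) * y| ≤ 16 * (x * y) ^ ((γ + 1) / 2) := by
  have hp0 : (0:ℝ) ≤ (x * y) ^ ((γ + 1) / 2) := Real.rpow_nonneg (by positivity) _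
  rcases le_total y x with hyx | hxy
  · -- case y ≤ x
    have hlow := bern_ge hx hy.le h1.le
    have hup := second_order hx hy.le hyx h1 h3
    have hyγ : (0:ℝ) ≤ y ^ γ := Real.rpow_nonneg hy.le γ
    have hq : (0:ℝ) ≤ 4 * x ^ (γ - 2) * y ^ 2 := by positivity
    have habs : |(x + y) ^ γ - x ^ γ - y ^ γ - γ * x ^ (γ - 1) * y|
        ≤ 4 * x ^ (γ - 2) * y ^ 2 + y ^ γ := by
      rw [abs_le]; constructor <;> linarith
    have m1 : y ^ (2:ℝ) * x ^ (γ - 1) ≤ (y * x) ^ ((γ + 1) / 2) :=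
      mono_pair hy hx hyx (by ring) (by linarith)
    have m2 : y ^ γ * x ^ (1:ℝ) ≤ (y * x) ^ ((γ + 1) / 2) :=
      mono_pair hy hx hyx (by ring) (by linarith)
    rw [mul_comm y x] at m1 m2
    rw [show (2:ℝ) = ((2:ℕ):ℝ) by norm_num, Real.rpow_natCast] at m1
    rw [Real.rpow_one] at m2
    have ex : x * x ^ (γ - 2) = x ^ (γ - 1) := by
      rw [show γ - 1 = (γ - 2) + 1 by ring, Real.rpow_add_one hx.ne', mul_comm]
    have key : x * (4 * x ^ (γ - 2) * y ^ 2 + y ^ γ) ≤ 16 * (x * y) ^ ((γ + 1) / 2) := by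
      have expand : x * (4 * x ^ (γ - 2) * y ^ 2 + y ^ γ)
          = 4 * (y ^ 2 * (x * x ^ (γ - 2))) + y ^ γ * x := by ring
      rw [expand, ex]
      linarith
    calc x * |(x + y) ^ γ - x ^ γ - y ^ γ - γ * x ^ (γ - 1) * y|
        ≤ x * (4 * x ^ (γ - 2) * y ^ 2 + y ^ γ) := mul_le_mul_of_nonneg_left habs hx.le
      _ ≤ 16 * (x * y) ^ ((γ + 1) / 2) := key
  · -- case x ≤ y
    have hlow := bern_ge hy hx.le h1.le
    rw [add_comm y x] at hlow
    have hup := second_order hy hx.le hxy h1 h3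
    rw [add_comm y x] at hup
    have hxγ : (0:ℝ) ≤ x ^ γ := Real.rpow_nonneg hx.le γ
    have hxg1 : (0:ℝ) ≤ x ^ (γ - 1) := Real.rpow_nonneg hx.le _
    have hyg1 : (0:ℝ) ≤ y ^ (γ - 1) := Real.rpow_nonneg hy.le _
    have hq : (0:ℝ) ≤ 4 * y ^ (γ - 2) * x ^ 2 := by positivity
    have hγ0 : (0:ℝ) < γ := by linarith
    have habs : |(x + y) ^ γ - x ^ γ - y ^ γ - γ * x ^ (γ - 1) * y|
        ≤ 4 * y ^ (γ - 2) * x ^ 2 + γ * y ^ (γ - 1) * x + x ^ γ + γ * x ^ (γ - 1) * y := by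
      rw [abs_le]; constructor
      · nlinarith [mul_nonneg (mul_nonneg hγ0.le hyg1) hx.le]
      · nlinarith [mul_nonneg (mul_nonneg hγ0.le hxg1) hy.le]
    have m1 : x ^ (3:ℝ) * y ^ (γ - 2) ≤ (x * y) ^ ((γ + 1) / 2) :=
      mono_pair hx hy hxy (by ring) (by linarith)
    have m2 : x ^ (2:ℝ) * y ^ (γ - 1) ≤ (x * y) ^ ((γ + 1) / 2) :=
      mono_pair hx hy hxy (by ring) (by linarith)
    have m3 : x ^ (γ + 1) * y ^ (0:ℝ) ≤ (x * y) ^ ((γ + 1) / 2) :=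
      mono_pair hx hy hxy (by ring) (by positivity)
    have m4 : x ^ γ * y ^ (1:ℝ) ≤ (x * y) ^ ((γ + 1) / 2) :=
      mono_pair hx hy hxy (by ring) (by linarith)
    rw [show (3:ℝ) = ((3:ℕ):ℝ) by norm_num, Real.rpow_natCast] at m1
    rw [show (2:ℝ) = ((2:ℕ):ℝ) by norm_num, Real.rpow_natCast] at m2
    rw [Real.rpow_zero, mul_one] at m3
    rw [Real.rpow_one] at m4
    have ex1 : x * x ^ γ = x ^ (γ + 1) := by
      rw [Real.rpow_add_one hx.ne', mul_comm]
    have ex2 : x * x ^ (γ - 1) = x ^ γ := by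
      rw [show γ = (γ - 1) + 1 by ring, Real.rpow_add_one hx.ne', mul_comm]
      ring_nf
    have m2' := mul_le_mul_of_nonneg_left m2 hγ0.le
    have m4' := mul_le_mul_of_nonneg_left m4 hγ0.le
    have key : x * (4 * y ^ (γ - 2) * x ^ 2 + γ * y ^ (γ - 1) * x + x ^ γ + γ * x ^ (γ - 1) * y)
        ≤ 16 * (x * y) ^ ((γ + 1) / 2) := by
      have expand : x * (4 * y ^ (γ - 2) * x ^ 2 + γ * y ^ (γ - 1) * x + x ^ γ
            + γ * x ^ (γ - 1) * y)
          = 4 * (x ^ 3 * y ^ (γ - 2)) + γ * (x ^ 2 * y ^ (γ - 1)) + (x * x ^ γ)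
            + γ * ((x * x ^ (γ - 1)) * y) := by ring
      rw [expand, ex1, ex2]
      nlinarith [hp0]
    calc x * |(x + y) ^ γ - x ^ γ - y ^ γ - γ * x ^ (γ - 1) * y|
        ≤ x * (4 * y ^ (γ - 2) * x ^ 2 + γ * y ^ (γ - 1) * x + x ^ γ + γ * x ^ (γ - 1) * y) :=
          mul_le_mul_of_nonneg_left habs hx.le
      _ ≤ 16 * (x * y) ^ ((γ + 1) / 2) := key

theorem triple {x y z γ : ℝ} (hx : 0 < x) (hy : 0 < y) (hz : 0 < z)
    (h1 : 1 < γ) (h3 : γ ≤ 3) :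
    x ^ (γ - 1) * y * z ≤ (x * y) ^ ((γ + 1) / 2) + (x * z) ^ ((γ + 1) / 2)
      + (y * z) ^ ((γ + 1) / 2) := by
  have hγ1 : (0:ℝ) < γ + 1 := by linarith
  have ha : (0:ℝ) ≤ (γ - 1) / (γ + 1) := div_nonneg (by linarith) hγ1.le
  have hd : (0:ℝ) ≤ (3 - γ) / (γ + 1) := div_nonneg (by linarith) hγ1.le
  have ha1 : (γ - 1) / (γ + 1) ≤ 1 := by rw [div_le_one hγ1]; linarith
  have hd1 : (3 - γ) / (γ + 1) ≤ 1 := by rw [div_le_one hγ1]; linarith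
  have hw : (γ - 1) / (γ + 1) + (γ - 1) / (γ + 1) + (3 - γ) / (γ + 1) = 1 := by
    field_simp; ring
  have hP1 : (0:ℝ) ≤ (x * y) ^ ((γ + 1) / 2) := Real.rpow_nonneg (by positivity) _
  have hP2 : (0:ℝ) ≤ (x * z) ^ ((γ + 1) / 2) := Real.rpow_nonneg (by positivity) _
  have hP3 : (0:ℝ) ≤ (y * z) ^ ((γ + 1) / 2) := Real.rpow_nonneg (by positivity) _
  have hg := Real.geom_mean_le_arith_mean3_weighted ha ha hd hP1 hP2 hP3 hw
  have heq : ((x * y) ^ ((γ + 1) / 2)) ^ ((γ - 1) / (γ + 1))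
      * ((x * z) ^ ((γ + 1) / 2)) ^ ((γ - 1) / (γ + 1))
      * ((y * z) ^ ((γ + 1) / 2)) ^ ((3 - γ) / (γ + 1)) = x ^ (γ - 1) * y * z := by
    rw [← Real.rpow_mul (by positivity : (0:ℝ) ≤ x * y),
      ← Real.rpow_mul (by positivity : (0:ℝ) ≤ x * z),
      ← Real.rpow_mul (by positivity : (0:ℝ) ≤ y * z),
      Real.rpow_def_of_pos (mul_pos hx hy), Real.rpow_def_of_pos (mul_pos hx hz),
      Real.rpow_def_of_pos (mul_pos hy hz),
      Real.log_mul hx.ne' hy.ne', Real.log_mul hx.ne' hz.ne', Real.log_mul hy.ne' hz.ne',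
      ← Real.exp_add, ← Real.exp_add]
    conv_rhs => rw [Real.rpow_def_of_pos hx, ← Real.exp_log hy, ← Real.exp_log hz,
      ← Real.exp_add, ← Real.exp_add]
    congr 1
    field_simp
    ring
  rw [heq] at hg
  nlinarith [mul_nonneg (sub_nonneg.2 ha1) hP1, mul_nonneg (sub_nonneg.2 ha1) hP2,
    mul_nonneg (sub_nonneg.2 hd1) hP3]

theorem sum_bound {ι : Type*} {A : Finset ι} (hA : A.Nonempty) {f : ι → ℝ}
    (hf : ∀ k ∈ A, 0 < f k) {q : ℝ} (hq0 : 0 < q) (hq2 : q ≤ 2) {n : ℕ} (hcard : A.card ≤ n) :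
    (∑ k ∈ A, f k) ^ q ≤ (n:ℝ) ^ 2 * ∑ k ∈ A, f k ^ q := by
  obtain ⟨k₀, hk₀, hmax⟩ := A.exists_max_image f hA
  have hn1 : 1 ≤ n := le_trans (Finset.Nonempty.card_pos hA) hcard
  have hfk : 0 < f k₀ := hf _ hk₀
  have hS : ∑ k ∈ A, f k ≤ (n:ℝ) * f k₀ := by
    calc ∑ k ∈ A, f k ≤ ∑ _k ∈ A, f k₀ := Finset.sum_le_sum fun k hk => hmax k hk
      _ = (A.card : ℝ) * f k₀ := by rw [Finset.sum_const, nsmul_eq_mul]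
      _ ≤ (n:ℝ) * f k₀ := mul_le_mul_of_nonneg_right (by exact_mod_cast hcard) hfk.le
  have hS0 : 0 < ∑ k ∈ A, f k := Finset.sum_pos hf hA
  calc (∑ k ∈ A, f k) ^ q ≤ ((n:ℝ) * f k₀) ^ q := Real.rpow_le_rpow hS0.le hS hq0.le
    _ = (n:ℝ) ^ q * f k₀ ^ q := Real.mul_rpow (by positivity) hfk.le
    _ ≤ (n:ℝ) ^ (2:ℝ) * f k₀ ^ q :=
        mul_le_mul_of_nonneg_right
          (Real.rpow_le_rpow_of_exponent_le (by exact_mod_cast hn1) hq2)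
          (Real.rpow_nonneg hfk.le q)
    _ ≤ (n:ℝ) ^ (2:ℝ) * ∑ k ∈ A, f k ^ q :=
        mul_le_mul_of_nonneg_left
          (Finset.single_le_sum (fun k hk => Real.rpow_nonneg (hf k hk).le q) hk₀)
          (Real.rpow_nonneg (by positivity) _)
    _ = (n:ℝ) ^ 2 * ∑ k ∈ A, f k ^ q := by
        rw [show (2:ℝ) = ((2:ℕ):ℝ) by norm_num, Real.rpow_natCast]

theorem diff_bound {x y q : ℝ} (hx : 0 < x) (hy : 0 < y) (hq0 : 0 < q) (hq2 : q ≤ 2) :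
    (x + y) ^ q - x ^ q ≤ 2 * (x ^ (q - 1) * y) + 2 * y ^ q := by
  have hxq1 : (0:ℝ) ≤ x ^ (q - 1) := Real.rpow_nonneg hx.le _
  have hyq : (0:ℝ) ≤ y ^ q := Real.rpow_nonneg hy.le _
  rcases le_or_gt q 1 with h | h
  · have hb := bern_le hx hy.le hq0.le h
    nlinarith [mul_nonneg hxq1 hy.le]
  · have hd := diff_le (show (0:ℝ) < x + y by linarith) hx.le (by linarith) h.le
    have hsub : (x + y) ^ (q - 1) ≤ x ^ (q - 1) + y ^ (q - 1) :=
      subadd hx.le hy.le (by linarith) (by linarith)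
    have ey : y ^ (q - 1) * y = y ^ q := by
      rw [show q = (q - 1) + 1 by ring, Real.rpow_add_one hy.ne']
      ring_nf
    have h2 : (x + y) ^ (q - 1) * y ≤ x ^ (q - 1) * y + y ^ q := by
      have := mul_le_mul_of_nonneg_right hsub hy.le
      rw [add_mul, ey] at this
      exact this
    have h3 : q * ((x + y) ^ (q - 1) * y) ≤ q * (x ^ (q - 1) * y + y ^ q) :=
      mul_le_mul_of_nonneg_left h2 (by linarith)
    have hd' : (x + y) ^ q - x ^ q ≤ q * ((x + y) ^ (q - 1) * y) := by
      have : x + y - x = y := by ring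
      calc (x + y) ^ q - x ^ q ≤ q * (x + y) ^ (q - 1) * (x + y - x) := hd
        _ = q * ((x + y) ^ (q - 1) * y) := by rw [this]; ring
    nlinarith [mul_nonneg hxq1 hy.le]

theorem T_nonneg {N : ℕ} (γ : ℝ) (b : Fin N → ℝ) (hb : ∀ j, 0 < b j) :
    0 ≤ ∑ k, ∑ j, if k ≠ j then (b k * b j) ^ ((γ + 1) / 2) else 0 := by
  apply Finset.sum_nonneg; intro k _
  apply Finset.sum_nonneg; intro j _
  split
  · exact Real.rpow_nonneg (mul_nonneg (hb k).le (hb j).le) _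
  · exact le_refl 0

theorem pair_le_T {N : ℕ} (γ : ℝ) (b : Fin N → ℝ) (hb : ∀ j, 0 < b j)
    {k j : Fin N} (hkj : k ≠ j) :
    (b k * b j) ^ ((γ + 1) / 2)
      ≤ ∑ k', ∑ j', if k' ≠ j' then (b k' * b j') ^ ((γ + 1) / 2) else 0 := by
  have hnn : ∀ k' j' : Fin N,
      (0:ℝ) ≤ if k' ≠ j' then (b k' * b j') ^ ((γ + 1) / 2) else 0 := by
    intro k' j'; split
    · exact Real.rpow_nonneg (mul_nonneg (hb k').le (hb j').le) _
    · exact le_refl 0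
  calc (b k * b j) ^ ((γ + 1) / 2)
      = (if k ≠ j then (b k * b j) ^ ((γ + 1) / 2) else 0) := by rw [if_pos hkj]
    _ ≤ ∑ j', if k ≠ j' then (b k * b j') ^ ((γ + 1) / 2) else 0 :=
        Finset.single_le_sum (fun j' _ => hnn k j') (Finset.mem_univ j)
    _ ≤ ∑ k', ∑ j', if k' ≠ j' then (b k' * b j') ^ ((γ + 1) / 2) else 0 :=
        Finset.single_le_sum
          (fun k' _ => Finset.sum_nonneg fun j' _ => hnn k' j') (Finset.mem_univ k)

theorem triple_le_T {N : ℕ} {γ : ℝ} (h1 : 1 < γ) (h3 : γ ≤ 3) (b : Fin N → ℝ)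
    (hb : ∀ j, 0 < b j) {x y z : Fin N} (hxy : x ≠ y) (hxz : x ≠ z) (hyz : y ≠ z) :
    (b x) ^ (γ - 1) * b y * b z
      ≤ 3 * ∑ k', ∑ j', if k' ≠ j' then (b k' * b j') ^ ((γ + 1) / 2) else 0 := by
  have h := triple (hb x) (hb y) (hb z) h1 h3
  have p1 := pair_le_T γ b hb hxy
  have p2 := pair_le_T γ b hb hxz
  have p3 := pair_le_T γ b hb hyz
  linarith

theorem key {N : ℕ} {γ : ℝ} (h1 : 1 < γ) (h3 : γ ≤ 3) (b : Fin N → ℝ) (hb : ∀ j, 0 < b j)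
    (i : Fin N) :
    ∀ A : Finset (Fin N), i ∉ A →
    b i * |(b i + ∑ j ∈ A, b j) ^ γ - (b i) ^ γ - (∑ j ∈ A, (b j) ^ γ)
      - γ * (b i) ^ (γ - 1) * (∑ j ∈ A, b j)|
    ≤ (A.card : ℝ) * (52 * (N:ℝ) ^ 3)
      * (∑ k, ∑ j, if k ≠ j then (b k * b j) ^ ((γ + 1) / 2) else 0) := by
  classical
  have hT := T_nonneg γ b hb
  have hN1 : (1:ℝ) ≤ (N:ℝ) := by exact_mod_cast i.pos
  intro A
  induction A using Finset.induction_on with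
  | empty => intro _; simp
  | @insert j A hjA ih =>
    intro hiA
    rw [Finset.mem_insert] at hiA
    push_neg at hiA
    obtain ⟨hij, hiA2⟩ := hiA
    have hbi := hb i
    have hbj := hb j
    set T := ∑ k, ∑ j', if k ≠ j' then (b k * b j') ^ ((γ + 1) / 2) else 0 with hTdef
    have ihA := ih hiA2
    rw [Finset.sum_insert hjA, Finset.sum_insert hjA,
      Finset.card_insert_of_notMem hjA]
    set y := ∑ j' ∈ A, b j' with hydef
    set Pγ := ∑ j' ∈ A, (b j') ^ γ with hPdef
    have hy0 : 0 ≤ y := Finset.sum_nonneg fun k _ => (hb k).le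
    have hS : 0 < b i + y := by linarith
    have harg : b i + (b j + y) = (b i + y) + b j := by ring
    rw [harg]
    set E := (b i + y) ^ γ - (b i) ^ γ - Pγ - γ * (b i) ^ (γ - 1) * y with hEdef
    set H := ((b i + y) + b j) ^ γ - (b i + y) ^ γ - (b j) ^ γ
      - γ * (b i + y) ^ (γ - 1) * (b j) with hHdef
    have hmono : (b i) ^ (γ - 1) ≤ (b i + y) ^ (γ - 1) :=
      Real.rpow_le_rpow hbi.le (by linarith) (by linarith)
    have hsec : 0 ≤ γ * ((b i + y) ^ (γ - 1) - (b i) ^ (γ - 1)) * b j :=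
      mul_nonneg (mul_nonneg (by linarith) (by linarith)) hbj.le
    have hsplit : ((b i + y) + b j) ^ γ - (b i) ^ γ - ((b j) ^ γ + Pγ)
        - γ * (b i) ^ (γ - 1) * (b j + y)
        = E + (H + γ * ((b i + y) ^ (γ - 1) - (b i) ^ (γ - 1)) * b j) := by
      rw [hEdef, hHdef]; ring
    rw [hsplit]
    have habs : |E + (H + γ * ((b i + y) ^ (γ - 1) - (b i) ^ (γ - 1)) * b j)|
        ≤ |E| + |H| + γ * ((b i + y) ^ (γ - 1) - (b i) ^ (γ - 1)) * b j := by
      have a1 := abs_add_le E (H + γ * ((b i + y) ^ (γ - 1) - (b i) ^ (γ - 1)) * b j)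
      have a2 := abs_add_le H (γ * ((b i + y) ^ (γ - 1) - (b i) ^ (γ - 1)) * b j)
      have a3 := abs_of_nonneg hsec
      linarith
    -- Term 1 : b i * |H| ≤ 16 * N^3 * T
    have hterm1 : b i * |H| ≤ 16 * (N:ℝ) ^ 3 * T := by
      have h2v := two_var hS hbj h1 h3
      have hc1 : b i * |H| ≤ (b i + y) * |H| :=
        mul_le_mul_of_nonneg_right (by linarith) (abs_nonneg _)
      have hsum : (b i + y) * b j = ∑ k ∈ insert i A, b k * b j := by
        rw [← Finset.sum_mul, Finset.sum_insert hiA2]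
      have hcard : (insert i A).card ≤ N := by
        calc (insert i A).card ≤ Finset.univ.card := Finset.card_le_univ _
          _ = N := by simp
      have hsb := sum_bound (Finset.insert_nonempty i A)
        (f := fun k => b k * b j) (fun k _ => mul_pos (hb k) hbj)
        (q := (γ + 1) / 2) (by linarith) (by linarith) hcard
      rw [← hsum] at hsb
      have heach : ∑ k ∈ insert i A, (b k * b j) ^ ((γ + 1) / 2) ≤ (N:ℝ) * T := by
        have hkT : ∀ k ∈ insert i A, (b k * b j) ^ ((γ + 1) / 2) ≤ T := by
          intro k hk
          have hkj : k ≠ j := by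
            rintro rfl
            rcases Finset.mem_insert.1 hk with h | h
            · exact hij h.symm
            · exact hjA h
          exact pair_le_T γ b hb hkj
        calc ∑ k ∈ insert i A, (b k * b j) ^ ((γ + 1) / 2)
            ≤ ∑ _k ∈ insert i A, T := Finset.sum_le_sum hkT
          _ = ((insert i A).card : ℝ) * T := by rw [Finset.sum_const, nsmul_eq_mul]
          _ ≤ (N:ℝ) * T := mul_le_mul_of_nonneg_right (by exact_mod_cast hcard) hT
      have hfin : ((b i + y) * b j) ^ ((γ + 1) / 2) ≤ (N:ℝ) ^ 2 * ((N:ℝ) * T) :=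
        le_trans hsb (mul_le_mul_of_nonneg_left heach (by positivity))
      calc b i * |H| ≤ (b i + y) * |H| := hc1
        _ ≤ 16 * ((b i + y) * b j) ^ ((γ + 1) / 2) := h2v
        _ ≤ 16 * ((N:ℝ) ^ 2 * ((N:ℝ) * T)) := by linarith
        _ = 16 * (N:ℝ) ^ 3 * T := by ring
    -- Term 2
    have hterm2 : b i * (γ * ((b i + y) ^ (γ - 1) - (b i) ^ (γ - 1)) * b j)
        ≤ 36 * (N:ℝ) ^ 3 * T := by
      rcases A.eq_empty_or_nonempty with rfl | hA
      · have hy' : y = 0 := by rw [hydef]; simp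
        rw [hy']
        simp only [add_zero, sub_self, mul_zero, zero_mul]
        exact mul_nonneg (by positivity) hT
      · have hy0' : 0 < y := Finset.sum_pos (fun k _ => hb k) hA
        have hdb := diff_bound hbi hy0' (q := γ - 1) (by linarith) (by linarith)
        have ex : b i * (b i) ^ (γ - 1 - 1) = (b i) ^ (γ - 1) := by
          rw [show γ - 1 = (γ - 1 - 1) + 1 by ring, Real.rpow_add_one hbi.ne', mul_comm]
          ring_nf
        have hcardA : A.card ≤ N := by
          calc A.card ≤ Finset.univ.card := Finset.card_le_univ _
            _ = N := by simp
        have hpA : (b i) ^ (γ - 1) * y * b j ≤ 3 * ((N:ℝ) * T) := by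
          have e : (b i) ^ (γ - 1) * y * b j
              = ∑ k ∈ A, (b i) ^ (γ - 1) * b k * b j := by
            rw [hydef, Finset.mul_sum, Finset.sum_mul]
          rw [e]
          have hkT : ∀ k ∈ A, (b i) ^ (γ - 1) * b k * b j ≤ 3 * T := by
            intro k hk
            have hik : i ≠ k := fun h => hiA2 (h ▸ hk)
            have hkj : k ≠ j := fun h => hjA (h ▸ hk)
            exact triple_le_T h1 h3 b hb hik hij hkj
          calc ∑ k ∈ A, (b i) ^ (γ - 1) * b k * b j ≤ ∑ _k ∈ A, 3 * T :=
              Finset.sum_le_sum hkT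
            _ = (A.card : ℝ) * (3 * T) := by rw [Finset.sum_const, nsmul_eq_mul]
            _ ≤ (N:ℝ) * (3 * T) :=
                mul_le_mul_of_nonneg_right (by exact_mod_cast hcardA) (by positivity)
            _ = 3 * ((N:ℝ) * T) := by ring
        have hpB : b i * y ^ (γ - 1) * b j ≤ 3 * ((N:ℝ) ^ 3 * T) := by
          have hsb := sum_bound hA (f := b) (fun k _ => hb k)
            (q := γ - 1) (by linarith) (by linarith) hcardA
          rw [← hydef] at hsb
          have hbij : (0:ℝ) ≤ b i * b j := mul_nonneg hbi.le hbj.le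
          have hkT : ∀ k ∈ A, (b k) ^ (γ - 1) * (b i * b j) ≤ 3 * T := by
            intro k hk
            have hki : k ≠ i := fun h => hiA2 (h ▸ hk)
            have hkj : k ≠ j := fun h => hjA (h ▸ hk)
            have ht := triple_le_T h1 h3 b hb hki hkj hij
            calc (b k) ^ (γ - 1) * (b i * b j) = (b k) ^ (γ - 1) * b i * b j := by ring
              _ ≤ 3 * T := ht
          have hsumT : ∑ k ∈ A, (b k) ^ (γ - 1) * (b i * b j) ≤ (N:ℝ) * (3 * T) := by
            calc ∑ k ∈ A, (b k) ^ (γ - 1) * (b i * b j) ≤ ∑ _k ∈ A, 3 * T :=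
                Finset.sum_le_sum hkT
              _ = (A.card : ℝ) * (3 * T) := by rw [Finset.sum_const, nsmul_eq_mul]
              _ ≤ (N:ℝ) * (3 * T) :=
                  mul_le_mul_of_nonneg_right (by exact_mod_cast hcardA) (by positivity)
          have h2 : y ^ (γ - 1) * (b i * b j)
              ≤ (N:ℝ) ^ 2 * ∑ k ∈ A, (b k) ^ (γ - 1) * (b i * b j) := by
            calc y ^ (γ - 1) * (b i * b j)
                ≤ ((N:ℝ) ^ 2 * ∑ k ∈ A, (b k) ^ (γ - 1)) * (b i * b j) :=
                  mul_le_mul_of_nonneg_right hsb hbij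
              _ = (N:ℝ) ^ 2 * ∑ k ∈ A, (b k) ^ (γ - 1) * (b i * b j) := by
                  rw [mul_assoc, Finset.sum_mul]
          calc b i * y ^ (γ - 1) * b j = y ^ (γ - 1) * (b i * b j) := by ring
            _ ≤ (N:ℝ) ^ 2 * ∑ k ∈ A, (b k) ^ (γ - 1) * (b i * b j) := h2
            _ ≤ (N:ℝ) ^ 2 * ((N:ℝ) * (3 * T)) :=
                mul_le_mul_of_nonneg_left hsumT (by positivity)
            _ = 3 * ((N:ℝ) ^ 3 * T) := by ring
        have hγ0 : (0:ℝ) ≤ γ := by linarith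
        have hpAe0 : (0:ℝ) ≤ (b i) ^ (γ - 1) * y * b j :=
          mul_nonneg (mul_nonneg (Real.rpow_nonneg hbi.le _) hy0) hbj.le
        have hpBe0 : (0:ℝ) ≤ b i * y ^ (γ - 1) * b j :=
          mul_nonneg (mul_nonneg hbi.le (Real.rpow_nonneg hy0 _)) hbj.le
        have estep : b i * (γ * ((b i + y) ^ (γ - 1) - (b i) ^ (γ - 1)) * b j)
            ≤ 2 * γ * ((b i) ^ (γ - 1) * y * b j) + 2 * γ * (b i * y ^ (γ - 1) * b j) := by
          have hc : (0:ℝ) ≤ γ * (b i * b j) :=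
            mul_nonneg hγ0 (mul_nonneg hbi.le hbj.le)
          have hmul := mul_le_mul_of_nonneg_left hdb hc
          have e2 : γ * (b i * b j) * (2 * ((b i) ^ (γ - 1 - 1) * y) + 2 * y ^ (γ - 1))
              = 2 * γ * ((b i * (b i) ^ (γ - 1 - 1)) * y * b j)
                + 2 * γ * (b i * y ^ (γ - 1) * b j) := by ring
          rw [e2, ex] at hmul
          calc b i * (γ * ((b i + y) ^ (γ - 1) - (b i) ^ (γ - 1)) * b j)
              = γ * (b i * b j) * ((b i + y) ^ (γ - 1) - (b i) ^ (γ - 1)) := by ring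
            _ ≤ 2 * γ * ((b i) ^ (γ - 1) * y * b j) + 2 * γ * (b i * y ^ (γ - 1) * b j) := hmul
        clear hdb ex
        have c1 : 2 * γ * ((b i) ^ (γ - 1) * y * b j) ≤ 6 * ((b i) ^ (γ - 1) * y * b j) :=
          mul_le_mul_of_nonneg_right (by linarith) hpAe0
        have c3 : 2 * γ * (b i * y ^ (γ - 1) * b j) ≤ 6 * (b i * y ^ (γ - 1) * b j) :=
          mul_le_mul_of_nonneg_right (by linarith) hpBe0
        have hNT0 : (0:ℝ) ≤ (N:ℝ) * T := mul_nonneg (by linarith) hT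
        have c5 : 18 * ((N:ℝ) * T) ≤ 18 * ((N:ℝ) ^ 3 * T) := by
          have hNN : (N:ℝ) ≤ (N:ℝ) ^ 3 := by
            nlinarith [mul_nonneg (mul_nonneg (show (0:ℝ) ≤ (N:ℝ) - 1 by linarith)
              (show (0:ℝ) ≤ (N:ℝ) by linarith)) (show (0:ℝ) ≤ (N:ℝ) + 1 by linarith)]
          have := mul_le_mul_of_nonneg_right hNN hT
          linarith
        linarith
    -- assemble
    have hbiabs := mul_le_mul_of_nonneg_left habs hbi.le
    have hdist : b i * (|E| + |H| + γ * ((b i + y) ^ (γ - 1) - (b i) ^ (γ - 1)) * b j)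
        = b i * |E| + b i * |H|
          + b i * (γ * ((b i + y) ^ (γ - 1) - (b i) ^ (γ - 1)) * b j) := by ring
    push_cast
    have hexp : ((A.card : ℝ) + 1) * (52 * (N:ℝ) ^ 3) * T
        = (A.card : ℝ) * (52 * (N:ℝ) ^ 3) * T + 52 * ((N:ℝ) ^ 3 * T) := by ring
    rw [hexp]
    have ht1 : b i * |H| ≤ 16 * ((N:ℝ) ^ 3 * T) := by linarith [hterm1]
    linarith [ihA, ht1, hterm2, hbiabs, hdist]

end Stmt9


theorem stmt_9 (N : ℕ) (hN : 1 ≤ N) (γ : ℝ) (hγ1 : 1 < γ) (hγ3 : γ ≤ 3)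
    (i : Fin N) (β : ℝ) (hβ : 0 < β) :
    ∃ c : ℝ, 0 < c ∧ ∀ b : Fin N → ℝ, (∀ j, 0 < b j) → ∀ s : ℝ, |s| ≤ β * b i →
      |(∑ j, b j) ^ γ * s - (∑ j, (b j) ^ γ) * s
        - γ * (b i) ^ (γ - 1) * (∑ j ∈ Finset.univ.erase i, b j) * s|
        ≤ c * ∑ k, ∑ j, if k ≠ j then (b k * b j) ^ ((γ + 1) / 2) else 0 := by
  classical
  have hN0 : (0:ℝ) < (N:ℝ) := by exact_mod_cast Nat.lt_of_lt_of_le Nat.zero_lt_one hN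
  refine ⟨52 * β * (N:ℝ) ^ 4, by positivity, ?_⟩
  intro b hb s hs
  have hT := Stmt9.T_nonneg γ b hb
  have hk := Stmt9.key hγ1 hγ3 b hb i (Finset.univ.erase i) (Finset.notMem_erase i _)
  have e1 : (∑ j, b j) = b i + ∑ j ∈ Finset.univ.erase i, b j :=
    (Finset.add_sum_erase _ _ (Finset.mem_univ i)).symm
  have e2 : (∑ j, (b j) ^ γ) = (b i) ^ γ + ∑ j ∈ Finset.univ.erase i, (b j) ^ γ :=
    (Finset.add_sum_erase _ _ (Finset.mem_univ i)).symm
  rw [e1, e2]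
  set T := ∑ k, ∑ j, if k ≠ j then (b k * b j) ^ ((γ + 1) / 2) else 0 with hTdef
  set R := ∑ j ∈ Finset.univ.erase i, b j with hRdef
  set Q := ∑ j ∈ Finset.univ.erase i, (b j) ^ γ with hQdef
  have hEe : (b i + R) ^ γ * s - ((b i) ^ γ + Q) * s - γ * (b i) ^ (γ - 1) * R * s
      = ((b i + R) ^ γ - (b i) ^ γ - Q - γ * (b i) ^ (γ - 1) * R) * s := by ring
  rw [hEe, abs_mul]
  have hbi := hb i
  have h1 : |(b i + R) ^ γ - (b i) ^ γ - Q - γ * (b i) ^ (γ - 1) * R| * |s|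
      ≤ |(b i + R) ^ γ - (b i) ^ γ - Q - γ * (b i) ^ (γ - 1) * R| * (β * b i) :=
    mul_le_mul_of_nonneg_left hs (abs_nonneg _)
  have hcard : ((Finset.univ.erase i).card : ℝ) ≤ (N:ℝ) := by
    have h := le_trans (Finset.card_le_univ (Finset.univ.erase i))
      (le_of_eq (Finset.card_univ))
    exact_mod_cast le_trans h (le_of_eq (Fintype.card_fin N))
  have h2 : b i * |(b i + R) ^ γ - (b i) ^ γ - Q - γ * (b i) ^ (γ - 1) * R|
      ≤ (N:ℝ) * (52 * (N:ℝ) ^ 3) * T := by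
    refine le_trans hk ?_
    exact mul_le_mul_of_nonneg_right
      (mul_le_mul_of_nonneg_right hcard (by positivity)) hT
  calc |(b i + R) ^ γ - (b i) ^ γ - Q - γ * (b i) ^ (γ - 1) * R| * |s|
      ≤ |(b i + R) ^ γ - (b i) ^ γ - Q - γ * (b i) ^ (γ - 1) * R| * (β * b i) := h1
    _ = β * (b i * |(b i + R) ^ γ - (b i) ^ γ - Q - γ * (b i) ^ (γ - 1) * R|) := by ring
    _ ≤ β * ((N:ℝ) * (52 * (N:ℝ) ^ 3) * T) := mul_le_mul_of_nonneg_left h2 hβ.le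
    _ = 52 * β * (N:ℝ) ^ 4 * T := by ring
end

section
/- Let n ≥ 5 and define c(n) = ((n−2)/2) c₀² ∫_{ℝⁿ} (|x|²−1)/(1+|x|²)^{n−1} dx, where c₀ = (n(n−2))^{(n−2)/4}. Then the integral converges and c(n) > 0. -/
/-!
In polar coordinates the integral is a positive multiple of `∫₀^∞ G`, where
`G r = r^m (r² - 1) / (1 + r²)^m` with `m = n - 1`; the decay `|f x| ≤ (1 + |x|²)^(2 - n)` gives
integrability. The inversion `r ↦ r⁻¹` turns `∫₀^∞ G` into `∫₀^∞ H` with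
`H r = r^(m-4) (1 - r²) / (1 + r²)^m`, and `G + H = r^(m-4) (r² - 1)² / (1 + r²)^(m-1)` is
positive off `r = 1`, so `2 ∫₀^∞ G = ∫₀^∞ (G + H) > 0`.
-/

open MeasureTheory Set Real Module

noncomputable section

def radialPart (m : ℕ) (r : ℝ) : ℝ := r ^ m * ((r ^ 2 - 1) / (1 + r ^ 2) ^ m)

/-- The pullback of `radialPart m` under `r ↦ r⁻¹`, Jacobian `r⁻²` included. -/
def radialPartInv (m : ℕ) (r : ℝ) : ℝ := r ^ m * ((1 - r ^ 2) / (r ^ 4 * (1 + r ^ 2) ^ m))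

end

theorem abs_neg_one_mul_rpow_smul_radialPart_rpow_neg_one (m : ℕ) {x : ℝ} (hx : 0 < x) :
    (|(-1 : ℝ)| * x ^ ((-1 : ℝ) - 1)) • radialPart m (x ^ (-1 : ℝ)) = radialPartInv m x := by
  rw [show (-1 : ℝ) - 1 = -(2 : ℕ) by norm_num, rpow_neg hx.le, rpow_neg_one, rpow_natCast]
  simp only [radialPart, radialPartInv, abs_neg, abs_one, one_mul, smul_eq_mul, inv_pow]
  rw [show 1 + (x ^ 2)⁻¹ = (1 + x ^ 2) / x ^ 2 by field_simp; ring, div_pow, ← pow_mul]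
  field_simp
  ring

theorem integral_radialPartInv (m : ℕ) :
    ∫ x in Ioi (0 : ℝ), radialPartInv m x = ∫ x in Ioi (0 : ℝ), radialPart m x := by
  rw [← integral_comp_rpow_Ioi (radialPart m) (p := -1) (by norm_num)]
  exact setIntegral_congr_fun measurableSet_Ioi fun x hx =>
    (abs_neg_one_mul_rpow_smul_radialPart_rpow_neg_one m hx).symm

theorem integrableOn_radialPartInv {m : ℕ} (h : IntegrableOn (radialPart m) (Ioi 0)) :
    IntegrableOn (radialPartInv m) (Ioi 0) :=
  ((integrableOn_Ioi_comp_rpow_iff _ (p := -1) (by norm_num)).2 h).congr_fun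
    (fun _ hx => abs_neg_one_mul_rpow_smul_radialPart_rpow_neg_one m hx) measurableSet_Ioi

theorem radialPart_add_radialPartInv (m : ℕ) {x : ℝ} (hx : x ≠ 0) :
    radialPart m x + radialPartInv m x =
      x ^ m * (x ^ 2 - 1) ^ 2 * (1 + x ^ 2) / (x ^ 4 * (1 + x ^ 2) ^ m) := by
  simp only [radialPart, radialPartInv]
  field_simp
  ring

theorem integral_radialPart_pos {m : ℕ} (h : IntegrableOn (radialPart m) (Ioi 0)) :
    0 < ∫ x in Ioi (0 : ℝ), radialPart m x := by
  have hinv := integrableOn_radialPartInv h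
  have hnonneg : 0 ≤ᵐ[volume.restrict (Ioi 0)] fun x => radialPart m x + radialPartInv m x := by
    filter_upwards [ae_restrict_mem measurableSet_Ioi] with x (hx : 0 < x)
    rw [Pi.zero_apply, radialPart_add_radialPartInv m hx.ne']
    positivity
  have hsupp : Ioi 1 ⊆ Function.support (fun x => radialPart m x + radialPartInv m x) ∩ Ioi 0 := by
    intro x (hx : 1 < x)
    have hx0 : 0 < x := one_pos.trans hx
    refine ⟨ne_of_gt ?_, hx0⟩
    show 0 < radialPart m x + radialPartInv m x
    rw [radialPart_add_radialPartInv m hx0.ne']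
    have : 0 < x ^ 2 - 1 := by nlinarith
    positivity
  have hpos : 0 < ∫ x in Ioi (0 : ℝ), radialPart m x + radialPartInv m x := by
    rw [setIntegral_pos_iff_support_of_nonneg_ae hnonneg (h.add hinv)]
    exact (Measure.measure_Ioi_pos volume 1).trans_le (measure_mono hsupp)
  rw [integral_add h hinv, integral_radialPartInv] at hpos
  linarith

section

variable {E : Type*} [NormedAddCommGroup E] [NormedSpace ℝ E] [FiniteDimensional ℝ E]
  [MeasurableSpace E] [BorelSpace E] (μ : Measure E) [μ.IsAddHaarMeasure]

theorem integrable_norm_sq_sub_one_div_one_add_norm_sq_pow {m : ℕ}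
    (hm : (finrank ℝ E : ℝ) < 2 * ((m : ℝ) - 1)) :
    Integrable (fun x : E => (‖x‖ ^ 2 - 1) / (1 + ‖x‖ ^ 2) ^ m) μ := by
  refine (integrable_rpow_neg_one_add_norm_sq hm).mono'
    (Continuous.aestronglyMeasurable (by fun_prop (disch := intro x; positivity)))
    (.of_forall fun x => ?_)
  have hpos : 0 < 1 + ‖x‖ ^ 2 := by positivity
  have hnum : |‖x‖ ^ 2 - 1| ≤ 1 + ‖x‖ ^ 2 := abs_le.2 ⟨by nlinarith, by nlinarith⟩
  calc ‖(‖x‖ ^ 2 - 1) / (1 + ‖x‖ ^ 2) ^ m‖ = |‖x‖ ^ 2 - 1| / (1 + ‖x‖ ^ 2) ^ m := by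
        rw [Real.norm_eq_abs, abs_div, abs_of_pos (pow_pos hpos m)]
    _ ≤ (1 + ‖x‖ ^ 2) / (1 + ‖x‖ ^ 2) ^ m := by gcongr
    _ = (1 + ‖x‖ ^ 2) ^ (-(2 * ((m : ℝ) - 1)) / 2) := by
        rw [show -(2 * ((m : ℝ) - 1)) / 2 = 1 - m by ring, rpow_sub hpos, rpow_one, rpow_natCast]

theorem integral_norm_sq_sub_one_div_one_add_norm_sq_pow_pos (hE : 5 ≤ finrank ℝ E) :
    0 < ∫ x, (‖x‖ ^ 2 - 1) / (1 + ‖x‖ ^ 2) ^ (finrank ℝ E - 1) ∂μ := by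
  have : Nontrivial E := Module.nontrivial_of_finrank_pos (R := ℝ) (by omega)
  have hE' : (5 : ℝ) ≤ finrank ℝ E := by exact_mod_cast hE
  have hint := integrable_norm_sq_sub_one_div_one_add_norm_sq_pow μ (m := finrank ℝ E - 1)
    (by rw [Nat.cast_sub (by omega), Nat.cast_one]; linarith)
  rw [integrable_fun_norm_addHaar μ
    (f := fun r => (r ^ 2 - 1) / (1 + r ^ 2) ^ (finrank ℝ E - 1))] at hint
  rw [integral_fun_norm_addHaar μ (fun r => (r ^ 2 - 1) / (1 + r ^ 2) ^ (finrank ℝ E - 1)),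
    nsmul_eq_mul, smul_eq_mul]
  have hball : 0 < μ.real (Metric.ball 0 1) :=
    ENNReal.toReal_pos (Metric.measure_ball_pos _ _ one_pos).ne' measure_ball_lt_top.ne
  exact mul_pos (by linarith) (mul_pos hball (integral_radialPart_pos hint))

end

theorem stmt_16 (n : ℕ) (hn : 5 ≤ n) :
    let c₀ : ℝ := (n * (n - 2) : ℝ) ^ (((n : ℝ) - 2) / 4)
    let f : EuclideanSpace ℝ (Fin n) → ℝ :=
      fun x => (‖x‖ ^ 2 - 1) / (1 + ‖x‖ ^ 2) ^ (n - 1)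
    Integrable f ∧ 0 < (((n : ℝ) - 2) / 2) * c₀ ^ 2 * ∫ x, f x := by
  intro c₀ f
  have hdim : finrank ℝ (EuclideanSpace ℝ (Fin n)) = n := finrank_euclideanSpace_fin
  have hn' : (5 : ℝ) ≤ n := by exact_mod_cast hn
  have hint : Integrable f :=
    integrable_norm_sq_sub_one_div_one_add_norm_sq_pow volume
      (by rw [hdim, Nat.cast_sub (by omega), Nat.cast_one]; linarith)
  have hpos : 0 < ∫ x, f x := by
    simpa only [hdim] using integral_norm_sq_sub_one_div_one_add_norm_sq_pow_pos
      (volume : Measure (EuclideanSpace ℝ (Fin n))) (hdim.symm ▸ hn)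
  have hc₀ : 0 < c₀ := rpow_pos_of_pos (by nlinarith) _
  exact ⟨hint, mul_pos (mul_pos (by linarith) (pow_pos hc₀ 2)) hpos⟩
end

section
/- Let n ≥ 3 and define c₂ = ((n−2)/2)² c₀^{2n/(n−2)} ∫_{ℝⁿ} (|x|²−1) ln(1+|x|²)/(1+|x|²)^{n+1} dx, where c₀ = (n(n−2))^{(n−2)/4}. Then the integral converges and c₂ > 0. -/
/-! In polar coordinates the integral is a positive multiple of `∫₀^∞ y^(n-1) F y dy`, where
`F y = (y² - 1) log (1 + y²) / (1 + y²)^(n+1)`. Folding `(1, ∞)` onto `(0, 1)` by `y ↦ 1/y`, the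
terms `(y² - 1) log (1 + y²)` cancel exactly (the weight `y^(n-1)` and the exponent `n + 1` are
matched), leaving `∫₀¹ r^(n-1) (1 - r²) (-2 log r) / (1 + r²)^(n+1) dr`, whose integrand is positive.
Integrability holds since `|F y| ≤ (1 + y²)^(1-n)` and `2 (n - 1) > n`. -/

open MeasureTheory Set Real Module

section Inversion

variable {F : Type*} [NormedAddCommGroup F] [NormedSpace ℝ F]

lemma image_inv_Ioo_zero_one : (fun r : ℝ => r⁻¹) '' Ioo 0 1 = Ioi 1 := by
  ext x
  constructor
  · rintro ⟨r, ⟨hr0, hr1⟩, rfl⟩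
    exact (one_lt_inv₀ hr0).mpr hr1
  · intro (hx : 1 < x)
    have hx0 : 0 < x := one_pos.trans hx
    exact ⟨x⁻¹, ⟨inv_pos.mpr hx0, (inv_lt_one₀ hx0).mpr hx⟩, inv_inv x⟩

lemma hasDerivWithinAt_inv_Ioo_zero_one :
    ∀ r ∈ Ioo (0 : ℝ) 1, HasDerivWithinAt (fun r : ℝ => r⁻¹) (-(r ^ 2)⁻¹) (Ioo 0 1) r :=
  fun _ hr => (hasDerivAt_inv hr.1.ne').hasDerivWithinAt

lemma integrableOn_Ioi_one_iff_comp_inv (g : ℝ → F) :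
    IntegrableOn g (Ioi 1) ↔ IntegrableOn (fun r => (r ^ 2)⁻¹ • g r⁻¹) (Ioo 0 1) := by
  rw [← image_inv_Ioo_zero_one, integrableOn_image_iff_integrableOn_abs_deriv_smul
    measurableSet_Ioo hasDerivWithinAt_inv_Ioo_zero_one inv_injective.injOn]
  simp only [abs_neg, abs_inv, abs_pow, sq_abs]

lemma integral_Ioi_one_eq_integral_comp_inv (g : ℝ → F) :
    ∫ y in Ioi 1, g y = ∫ r in Ioo 0 1, (r ^ 2)⁻¹ • g r⁻¹ := by
  rw [← image_inv_Ioo_zero_one, integral_image_eq_integral_abs_deriv_smul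
    measurableSet_Ioo hasDerivWithinAt_inv_Ioo_zero_one inv_injective.injOn]
  simp only [abs_neg, abs_inv, abs_pow, sq_abs]

variable {g : ℝ → F}

lemma MeasureTheory.IntegrableOn.add_comp_inv (hg : IntegrableOn g (Ioi 0)) :
    IntegrableOn (fun r => g r + (r ^ 2)⁻¹ • g r⁻¹) (Ioo 0 1) :=
  (hg.mono_set Ioo_subset_Ioi_self).add
    ((integrableOn_Ioi_one_iff_comp_inv g).1 (hg.mono_set (Ioi_subset_Ioi zero_le_one)))

lemma integral_Ioi_zero_eq_integral_add_comp_inv (hg : IntegrableOn g (Ioi 0)) :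
    ∫ y in Ioi 0, g y = ∫ r in Ioo 0 1, g r + (r ^ 2)⁻¹ • g r⁻¹ := by
  have hsplit : Ioi (0 : ℝ) = Ioo 0 1 ∪ Ici 1 := (Ioo_union_Ici_eq_Ioi zero_lt_one).symm
  have hint : IntegrableOn g (Ioi 1) := hg.mono_set (Ioi_subset_Ioi zero_le_one)
  rw [hsplit, setIntegral_union (by simp [disjoint_left]) measurableSet_Ici
      (hg.mono_set Ioo_subset_Ioi_self) (hg.mono_set (Ici_subset_Ioi.2 zero_lt_one)),
    integral_Ici_eq_integral_Ioi, integral_Ioi_one_eq_integral_comp_inv,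
    integral_add (hg.mono_set Ioo_subset_Ioi_self) ((integrableOn_Ioi_one_iff_comp_inv g).1 hint)]

end Inversion

noncomputable def logProfile (n : ℕ) (y : ℝ) : ℝ :=
  (y ^ 2 - 1) * log (1 + y ^ 2) / (1 + y ^ 2) ^ (n + 1)

lemma continuous_logProfile (n : ℕ) : Continuous (logProfile n) := by
  have hlog : Continuous fun y : ℝ => log (1 + y ^ 2) :=
    Continuous.log (by fun_prop) fun y => by positivity
  exact ((continuous_id.pow 2).sub continuous_const |>.mul hlog).div (by fun_prop)
    fun y => by positivity

lemma abs_logProfile_le (n : ℕ) (y : ℝ) :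
    |logProfile n y| ≤ (1 + y ^ 2) ^ (-(2 * (n : ℝ) - 2) / 2) := by
  have hs : (0 : ℝ) < 1 + y ^ 2 := by positivity
  have hlog : 0 ≤ log (1 + y ^ 2) := log_nonneg (by nlinarith)
  have hrpow : (1 + y ^ 2) ^ (-(2 * (n : ℝ) - 2) / 2)
      = (1 + y ^ 2) * (1 + y ^ 2) / (1 + y ^ 2) ^ (n + 1) := by
    rw [show -(2 * (n : ℝ) - 2) / 2 = 2 - (n + 1 : ℕ) by push_cast; ring,
      rpow_sub hs, rpow_natCast, rpow_two, sq]
  rw [hrpow, logProfile, abs_div, abs_mul, abs_of_nonneg hlog, abs_of_pos (pow_pos hs _)]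
  gcongr
  · exact abs_le.2 ⟨by nlinarith [sq_nonneg y], by linarith⟩
  · exact (log_le_sub_one_of_pos hs).trans (by linarith)

lemma radial_logProfile_add_comp_inv {n : ℕ} (hn : n ≠ 0) {r : ℝ} (hr : 0 < r) :
    r ^ (n - 1) * logProfile n r + (r ^ 2)⁻¹ * (r⁻¹ ^ (n - 1) * logProfile n r⁻¹)
      = r ^ (n - 1) * (1 - r ^ 2) * (-2 * log r) / (1 + r ^ 2) ^ (n + 1) := by
  obtain ⟨k, rfl⟩ : ∃ k, n = k + 1 := ⟨n - 1, by omega⟩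
  have hinv : 1 + r⁻¹ ^ 2 = (1 + r ^ 2) / r ^ 2 := by field_simp; ring
  have hlog : log (1 + r⁻¹ ^ 2) = log (1 + r ^ 2) - 2 * log r := by
    rw [hinv, log_div (by positivity) (by positivity), log_pow, Nat.cast_ofNat]
  rw [logProfile, logProfile, hlog, hinv, div_pow, inv_pow, inv_pow, Nat.add_sub_cancel]
  field_simp
  ring

lemma integral_radial_logProfile_pos {n : ℕ} (hn : n ≠ 0)
    (hint : IntegrableOn (fun y => y ^ (n - 1) * logProfile n y) (Ioi 0)) :
    0 < ∫ y in Ioi 0, y ^ (n - 1) * logProfile n y := by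
  set h : ℝ → ℝ := fun r => r ^ (n - 1) * (1 - r ^ 2) * (-2 * log r) / (1 + r ^ 2) ^ (n + 1)
  have hcongr : EqOn (fun r => r ^ (n - 1) * logProfile n r
      + (r ^ 2)⁻¹ • (r⁻¹ ^ (n - 1) * logProfile n r⁻¹)) h (Ioo 0 1) :=
    fun r hr => radial_logProfile_add_comp_inv hn hr.1
  have hint_fold : IntegrableOn h (Ioo 0 1) := hint.add_comp_inv.congr_fun hcongr measurableSet_Ioo
  have hpos : ∀ r ∈ Ioo (0 : ℝ) 1, 0 < h r := fun r ⟨hr0, hr1⟩ => by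
    have : log r < 0 := log_neg hr0 hr1
    have : r ^ 2 < 1 := pow_lt_one₀ hr0.le hr1 two_ne_zero
    simp only [h]
    exact div_pos (mul_pos (mul_pos (by positivity) (by linarith)) (by linarith)) (by positivity)
  rw [integral_Ioi_zero_eq_integral_add_comp_inv hint,
    setIntegral_congr_fun measurableSet_Ioo hcongr, ← integral_Ioc_eq_integral_Ioo,
    ← intervalIntegral.integral_of_le zero_le_one]
  exact intervalIntegral.intervalIntegral_pos_of_pos_on
    ((intervalIntegrable_iff_integrableOn_Ioo_of_le zero_le_one).2 hint_fold) hpos zero_lt_one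

section Radial

variable {E : Type*} [NormedAddCommGroup E] [NormedSpace ℝ E] [FiniteDimensional ℝ E]
  [MeasurableSpace E] [BorelSpace E] (μ : Measure E) [μ.IsAddHaarMeasure]

lemma integrable_logProfile_norm {n : ℕ} (hn : finrank ℝ E + 2 < 2 * n) :
    Integrable (fun x : E => logProfile n ‖x‖) μ := by
  refine (integrable_rpow_neg_one_add_norm_sq (r := 2 * (n : ℝ) - 2) ?_).mono'
    ((continuous_logProfile n).comp continuous_norm).aestronglyMeasurable
    (ae_of_all _ fun x => abs_logProfile_le n ‖x‖)
  exact_mod_cast (by omega : (finrank ℝ E : ℤ) < 2 * n - 2)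

lemma integral_logProfile_norm_pos {n : ℕ} (hE : finrank ℝ E = n) (hn : 3 ≤ n) :
    0 < ∫ x, logProfile n ‖x‖ ∂μ := by
  have : Nontrivial E := Module.nontrivial_of_finrank_pos (R := ℝ) (by omega)
  have hint := (integrable_fun_norm_addHaar μ).1 (integrable_logProfile_norm μ (n := n) (by omega))
  rw [integral_fun_norm_addHaar, hE, nsmul_eq_mul, smul_eq_mul]
  simp only [hE, smul_eq_mul] at hint ⊢
  have hball : 0 < μ.real (Metric.ball 0 1) :=
    ENNReal.toReal_pos (Metric.measure_ball_pos μ 0 one_pos).ne' measure_ball_lt_top.ne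
  have hradial := integral_radial_logProfile_pos (by omega) hint
  positivity

end Radial

theorem stmt_17 (n : ℕ) (hn : 3 ≤ n) :
    let c₀ : ℝ := (n * (n - 2) : ℝ) ^ (((n : ℝ) - 2) / 4)
    let f : EuclideanSpace ℝ (Fin n) → ℝ :=
      fun x => (‖x‖ ^ 2 - 1) * Real.log (1 + ‖x‖ ^ 2) / (1 + ‖x‖ ^ 2) ^ (n + 1)
    Integrable f ∧
      0 < (((n : ℝ) - 2) / 2) ^ 2 * c₀ ^ ((2 * (n : ℝ)) / ((n : ℝ) - 2)) * ∫ x, f x := by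
  intro c₀ f
  have hE : finrank ℝ (EuclideanSpace ℝ (Fin n)) = n := finrank_euclideanSpace_fin
  have hn' : (2 : ℝ) < n := by exact_mod_cast hn
  have hc₀ : 0 < c₀ := rpow_pos_of_pos (mul_pos (by linarith) (by linarith)) _
  have hscale : 0 < ((n : ℝ) - 2) / 2 := by linarith
  refine ⟨integrable_logProfile_norm volume (by omega), ?_⟩
  exact mul_pos (mul_pos (by positivity) (rpow_pos_of_pos hc₀ _))
    (integral_logProfile_norm_pos volume hE hn)
end
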